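/- Let 0 < a ≤ b. Then lim_{R→∞} ∫_ℝ (1/R)·φ_{a,R}(y)·φ_{b,R}(y) dy = 2ab. -/

import Mathlib

open MeasureTheory Real intervalIntegral Filter Topology

/-- `φ_{a,R}(y) = (1/2) ∫_{-R}^R 1_{|x-y|≤a} dx`. -/
noncomputable def phi (a R y : ℝ) : ℝ :=
  (1/2) * ∫ x in (-R)..R, if |x - y| ≤ a then (1:ℝ) else 0

/-!
Since `φ_{c,R}(y)` is half the length of `[-R, R] ∩ [y - c, y + c]`, it is at most `c`, equals `c`
for `|y| ≤ R - c` and vanishes for `|y| ≥ R + c`. Hence `∫ φ_{a,R} φ_{b,R}` lies between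
`2 (R - b) a b` and `2 (R + a) a b`, and dividing by `R` squeezes the limit to `2 a b`.
-/

open Set

lemma phi_eq (a R y : ℝ) (hR : 0 ≤ R) :
    phi a R y = (1 / 2) * max (min R (y + a) - max (-R) (y - a)) 0 := by
  have hind : (fun x => if |x - y| ≤ a then (1 : ℝ) else 0) =
      (Icc (y - a) (y + a)).indicator 1 := by
    ext x
    simp only [indicator_apply, mem_Icc, abs_le, Pi.one_apply, sub_le_iff_le_add',
      neg_le_sub_iff_le_add, add_comm a]
  rw [phi, hind, integral_of_le (by linarith), setIntegral_congr_set Ioc_ae_eq_Icc,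
    setIntegral_indicator measurableSet_Icc, Pi.one_def, setIntegral_const, smul_eq_mul,
    mul_one, Icc_inter_Icc, Real.volume_real_Icc]

lemma phi_nonneg (a R y : ℝ) (hR : 0 ≤ R) : 0 ≤ phi a R y := by
  rw [phi_eq a R y hR]
  positivity

lemma phi_le (a R y : ℝ) (ha : 0 ≤ a) (hR : 0 ≤ R) : phi a R y ≤ a := by
  rw [phi_eq a R y hR]
  have : max (min R (y + a) - max (-R) (y - a)) 0 ≤ 2 * a :=
    max_le (by linarith [min_le_right R (y + a), le_max_right (-R) (y - a)]) (by linarith)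
  linarith

lemma phi_eq_of_abs_le (a R y : ℝ) (ha : 0 ≤ a) (hy : |y| ≤ R - a) : phi a R y = a := by
  obtain ⟨hy₁, hy₂⟩ := abs_le.mp hy
  rw [phi_eq a R y (by linarith), max_eq_right (show -R ≤ y - a by linarith),
    min_eq_right (show y + a ≤ R by linarith), max_eq_left (by linarith)]
  ring

lemma phi_eq_zero_of_le_abs (a R y : ℝ) (hR : 0 ≤ R) (hy : R + a ≤ |y|) : phi a R y = 0 := by
  rw [phi_eq a R y hR, max_eq_right, mul_zero]
  rcases le_abs.mp hy with h | h
  · linarith [min_le_left R (y + a), le_max_right (-R) (y - a)]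
  · linarith [min_le_right R (y + a), le_max_left (-R) (y - a)]

lemma continuous_phi (a R : ℝ) (hR : 0 ≤ R) : Continuous (phi a R) := by
  simp_rw [funext (phi_eq a R · hR)]
  fun_prop

lemma mul_le_integral_of_eqOn_Icc {f : ℝ → ℝ} {r M : ℝ} (hf : Integrable f) (hf₀ : 0 ≤ f)
    (hr : 0 ≤ r) (hM : EqOn f (fun _ => M) (Icc (-r) r)) : 2 * r * M ≤ ∫ y, f y :=
  calc 2 * r * M = ∫ y in Icc (-r) r, f y := by
        rw [setIntegral_congr_fun measurableSet_Icc hM, setIntegral_const, smul_eq_mul,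
          Real.volume_real_Icc_of_le (by linarith)]
        ring
    _ ≤ ∫ y, f y := setIntegral_le_integral hf (.of_forall hf₀)

lemma integral_le_mul_of_forall_notMem_Icc {f : ℝ → ℝ} {s M : ℝ} (hf : Integrable f)
    (hs : 0 ≤ s) (hM : ∀ y, f y ≤ M) (hzero : ∀ y ∉ Icc (-s) s, f y = 0) :
    ∫ y, f y ≤ 2 * s * M :=
  calc ∫ y, f y = ∫ y in Icc (-s) s, f y :=
        (setIntegral_eq_integral_of_forall_compl_eq_zero hzero).symm
    _ ≤ ∫ _ in Icc (-s) s, M :=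
        setIntegral_mono_on hf.integrableOn (integrableOn_const (by simp)) measurableSet_Icc
          fun y _ => hM y
    _ = 2 * s * M := by
        rw [setIntegral_const, smul_eq_mul, Real.volume_real_Icc_of_le (by linarith)]
        ring

lemma integral_phi_mul_phi_mem_Icc (a b R : ℝ) (ha : 0 ≤ a) (hab : a ≤ b) (hbR : b ≤ R) :
    ∫ y, phi a R y * phi b R y ∈ Icc (2 * (R - b) * (a * b)) (2 * (R + a) * (a * b)) := by
  have hR : 0 ≤ R := by linarith
  have hzero : ∀ y ∉ Icc (-(R + a)) (R + a), phi a R y * phi b R y = 0 := fun y hy => by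
    have hy : R + a < |y| := not_le.mp fun h => hy (abs_le.mp h)
    rw [phi_eq_zero_of_le_abs a R y hR hy.le, zero_mul]
  have hf : Integrable fun y => phi a R y * phi b R y :=
    ((continuous_phi a R hR).mul (continuous_phi b R hR)).integrable_of_hasCompactSupport
      (HasCompactSupport.intro isCompact_Icc hzero)
  refine ⟨mul_le_integral_of_eqOn_Icc hf (fun y => ?_) (by linarith) fun y hy => ?_,
    integral_le_mul_of_forall_notMem_Icc hf (by linarith) (fun y => ?_) hzero⟩
  · exact mul_nonneg (phi_nonneg a R y hR) (phi_nonneg b R y hR)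
  · have hy := abs_le.mpr hy
    simp only [phi_eq_of_abs_le a R y ha (by linarith), phi_eq_of_abs_le b R y (by linarith) hy]
  · exact mul_le_mul (phi_le a R y ha hR) (phi_le b R y (by linarith) hR)
      (phi_nonneg b R y hR) ha

lemma tendsto_inv_mul_add_const_atTop (c : ℝ) :
    Tendsto (fun R : ℝ => R⁻¹ * (R + c)) atTop (𝓝 1) := by
  have : Tendsto (fun R : ℝ => 1 + c * R⁻¹) atTop (𝓝 (1 + c * 0)) :=
    tendsto_const_nhds.add (tendsto_const_nhds.mul tendsto_inv_atTop_zero)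
  rw [mul_zero, add_zero] at this
  refine this.congr' ?_
  filter_upwards [eventually_ne_atTop 0] with R hR
  field_simp

/-- Lemma 3.1 (limit): for `0 < a ≤ b`,
`lim_{R→∞} ∫_ℝ (1/R) φ_{a,R}(y) φ_{b,R}(y) dy = 2ab`. -/
theorem stmt_4 (a b : ℝ) (ha : 0 < a) (hab : a ≤ b) :
    Tendsto (fun R : ℝ => ∫ y : ℝ, (1 / R) * phi a R y * phi b R y)
      atTop (𝓝 (2 * a * b)) := by
  have hint (R : ℝ) :
      ∫ y, 1 / R * phi a R y * phi b R y = R⁻¹ * ∫ y, phi a R y * phi b R y := by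
    simp_rw [mul_assoc, one_div]
    exact integral_const_mul _ _
  have hlim (c : ℝ) :
      Tendsto (fun R : ℝ => R⁻¹ * (2 * (R + c) * (a * b))) atTop (𝓝 (2 * a * b)) := by
    convert (tendsto_inv_mul_add_const_atTop c).mul_const (2 * a * b) using 2 <;> ring
  have hbounds : ∀ᶠ R in atTop,
      R⁻¹ * (2 * (R + -b) * (a * b)) ≤ R⁻¹ * ∫ y, phi a R y * phi b R y ∧
        R⁻¹ * ∫ y, phi a R y * phi b R y ≤ R⁻¹ * (2 * (R + a) * (a * b)) := by
    filter_upwards [eventually_ge_atTop b] with R hbR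
    obtain ⟨hlow, hupp⟩ := integral_phi_mul_phi_mem_Icc a b R ha.le hab hbR
    have hR : 0 ≤ R⁻¹ := inv_nonneg.mpr (by linarith)
    exact ⟨by rw [← sub_eq_add_neg]; gcongr, by gcongr⟩
  simp only [hint]
  exact tendsto_of_tendsto_of_tendsto_of_le_of_le' (hlim (-b)) (hlim a)
    (hbounds.mono fun _ => And.left) (hbounds.mono fun _ => And.right)
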